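/- Let d ≥ 2 be an integer and let s, r ∈ [0,(d-1)/d]. Set Δ(s,r) = H₂(s) - H₂(r) + (s-r)·log(d-1). Then D₂(s‖r) ≥ N(d)·(exp(Δ(s,r)/N(d)) - 1 - Δ(s,r)/N(d)) (an inequality in [0,∞]). -/

import Mathlib

open scoped ENNReal BigOperators

noncomputable section

/-- Binary entropy (natural log), with Lean's convention `Real.log 0 = 0`. -/
def binEntropy' (x : ℝ) : ℝ := -(x * Real.log x) - (1 - x) * Real.log (1 - x)

/-- Binary relative entropy, valued in `[0,∞]`. -/
def binRelEntropy (x y : ℝ) : ℝ≥0∞ :=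
  if (y = 0 ∧ 0 < x) ∨ (y = 1 ∧ x < 1) then ⊤
  else ENNReal.ofReal (x * Real.log (x / y) + (1 - x) * Real.log ((1 - x) / (1 - y)))

/-- `M(Δ,d)`: infimum of binary relative entropies under the entropy-difference constraint. -/
def Mfun (Δ : ℝ) (d : ℕ) : ℝ≥0∞ :=
  sInf {m : ℝ≥0∞ | ∃ s r : ℝ, s ∈ Set.Icc (0:ℝ) (((d:ℝ) - 1) / d) ∧
    r ∈ Set.Icc (0:ℝ) (((d:ℝ) - 1) / d) ∧
    binEntropy' s - binEntropy' r + (s - r) * Real.log ((d:ℝ) - 1) = Δ ∧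
    m = binRelEntropy s r}

/-- Shannon entropy of a probability vector on `Fin d` (natural log). -/
def shEntropy {d : ℕ} (p : Fin d → ℝ) : ℝ := ∑ i, -(p i * Real.log (p i))

/-- Relative entropy between probability vectors on `Fin d`, valued in `[0,∞]`. -/
def relEntropy {d : ℕ} (p q : Fin d → ℝ) : ℝ≥0∞ :=
  if ∀ i, q i = 0 → p i = 0
  then ENNReal.ofReal (∑ i, p i * Real.log (p i / q i))
  else ⊤

/-- `N(d) = sup_{0<r<1/2} r(1-r) (log(((1-r)/r)(d-1)))²`. -/
def Nfun (d : ℕ) : ℝ :=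
  sSup {v : ℝ | ∃ r : ℝ, 0 < r ∧ r < 1/2 ∧
    v = r * (1 - r) * (Real.log ((1 - r) / r * ((d:ℝ) - 1)))^2}

/-!
Write `f x = H₂(x) + x log(d-1)`, `T = f'` and `φ t = exp t - 1 - t`. For fixed `r ∈ (0,1)` the gap
`g x = D₂(x‖r) - N φ((f x - f r)/N)` vanishes at `x = r` and has derivative
`g' x = T r - exp((f x - f r)/N) T x = exp(-f r/N) (w r - w x)` with `w = exp(f/N) T`.
As `T' x = -1/(x(1-x))`, we get `w' = exp(f/N) (T²/N - 1/(x(1-x))) ≤ 0` exactly when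
`x(1-x) T(x)² ≤ N`, which is what the definition of `N(d)` provides. So `w` is antitone, `g'`
changes sign from `-` to `+` at `r`, and `r` minimises `g` on `[0,1]`.
-/

open Real Set

theorem binEntropy'_eq_binEntropy : binEntropy' = binEntropy := by
  ext x
  simp only [binEntropy', binEntropy, log_inv]
  ring

theorem mul_log_div_add_one_sub_mul_log_div_eq {r : ℝ} (hr₀ : r ≠ 0) (hr₁ : r ≠ 1) (x : ℝ) :
    x * log (x / r) + (1 - x) * log ((1 - x) / (1 - r)) =
      -binEntropy x - x * log r - (1 - x) * log (1 - r) := by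
  have hr₁' : 1 - r ≠ 0 := sub_ne_zero.2 hr₁.symm
  have h₀ : x * log (x / r) = x * log x - x * log r := by
    rcases eq_or_ne x 0 with rfl | hx
    · simp
    · rw [log_div hx hr₀]; ring
  have h₁ : (1 - x) * log ((1 - x) / (1 - r)) = (1 - x) * log (1 - x) - (1 - x) * log (1 - r) := by
    rcases eq_or_ne (1 - x) 0 with hx | hx
    · simp [hx]
    · rw [log_div hx hr₁']; ring
  rw [h₀, h₁, binEntropy, log_inv, log_inv]
  ring

theorem log_one_sub_div_mul_eq {x m : ℝ} (hx₀ : x ≠ 0) (hx₁ : x ≠ 1) (hm : m ≠ 0) :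
    log ((1 - x) / x * m) = log (1 - x) - log x + log m := by
  have hx₁' : 1 - x ≠ 0 := sub_ne_zero.2 hx₁.symm
  rw [log_mul (div_ne_zero hx₁' hx₀) hm, log_div hx₁' hx₀]

theorem sq_log_le_four_mul {y : ℝ} (hy : 1 ≤ y) : log y ^ 2 ≤ 4 * y := by
  have hy₀ : 0 < y := by linarith
  have hlog : log y ≤ 2 * √y := by
    have := log_le_sub_one_of_pos (sqrt_pos.2 hy₀)
    rw [log_sqrt hy₀.le] at this
    linarith
  calc log y ^ 2 ≤ (2 * √y) ^ 2 := pow_le_pow_left₀ (log_nonneg hy) hlog 2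
    _ = 4 * y := by rw [mul_pow, sq_sqrt hy₀.le]; norm_num

theorem isMinOn_of_hasDerivAt_nonpos_nonneg {g g' : ℝ → ℝ} {a b r : ℝ} (hr : r ∈ Icc a b)
    (hg : ContinuousOn g (Icc a b)) (hg' : ∀ x ∈ Ioo a b, HasDerivAt g (g' x) x)
    (hleft : ∀ x ∈ Ioo a r, g' x ≤ 0) (hright : ∀ x ∈ Ioo r b, 0 ≤ g' x) :
    IsMinOn g (Icc a b) r := by
  intro s hs
  rcases le_total s r with hsr | hrs
  · refine antitoneOn_of_hasDerivWithinAt_nonpos (f' := g') (convex_Icc s r)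
      (hg.mono (Icc_subset_Icc hs.1 hr.2)) ?_ ?_ ⟨le_rfl, hsr⟩ ⟨hsr, le_rfl⟩ hsr <;>
      rw [interior_Icc] <;> intro x hx
    · exact (hg' x ⟨hs.1.trans_lt hx.1, hx.2.trans_le hr.2⟩).hasDerivWithinAt
    · exact hleft x ⟨hs.1.trans_lt hx.1, hx.2⟩
  · refine monotoneOn_of_hasDerivWithinAt_nonneg (f' := g') (convex_Icc r s)
      (hg.mono (Icc_subset_Icc hr.1 hs.2)) ?_ ?_ ⟨le_rfl, hrs⟩ ⟨hrs, le_rfl⟩ hrs <;>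
      rw [interior_Icc] <;> intro x hx
    · exact (hg' x ⟨hr.1.trans_lt hx.1, hx.2.trans_le hs.2⟩).hasDerivWithinAt
    · exact hright x ⟨hx.1, hx.2.trans_le hs.2⟩

/-- For `c = log (q - 1)` this is Mathlib's `Real.qaryEntropy q`. -/
def tiltedEntropy (c x : ℝ) : ℝ := binEntropy x + x * c

def tiltedEntropyDeriv (c x : ℝ) : ℝ := log (1 - x) - log x + c

section Tilted

variable {c N r s x : ℝ}

@[fun_prop]
theorem continuous_tiltedEntropy : Continuous (tiltedEntropy c) := by
  unfold tiltedEntropy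
  fun_prop

theorem hasDerivAt_tiltedEntropy (hx : x ∈ Ioo 0 1) :
    HasDerivAt (tiltedEntropy c) (tiltedEntropyDeriv c x) x :=
  ((hasDerivAt_binEntropy hx.1.ne' hx.2.ne).fun_add ((hasDerivAt_id' x).mul_const c)).congr_deriv
    (by rw [one_mul, tiltedEntropyDeriv, add_comm])

theorem hasDerivAt_tiltedEntropyDeriv (hx : x ∈ Ioo 0 1) :
    HasDerivAt (tiltedEntropyDeriv c) (-(x * (1 - x))⁻¹) x := by
  have h₀ : x ≠ 0 := hx.1.ne'
  have h₁ : 1 - x ≠ 0 := sub_ne_zero.2 hx.2.ne'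
  refine (((((hasDerivAt_id' x).const_sub 1).log h₁).fun_sub (hasDerivAt_log h₀)).add_const
    c).congr_deriv ?_
  field_simp
  ring

theorem antitoneOn_exp_tiltedEntropy_mul_tiltedEntropyDeriv (hN : 0 < N)
    (hbound : ∀ x ∈ Ioo 0 1, x * (1 - x) * tiltedEntropyDeriv c x ^ 2 ≤ N) :
    AntitoneOn (fun x ↦ exp (tiltedEntropy c x / N) * tiltedEntropyDeriv c x) (Ioo 0 1) := by
  have hderiv : ∀ x ∈ Ioo (0 : ℝ) 1, HasDerivAt
      (fun x ↦ exp (tiltedEntropy c x / N) * tiltedEntropyDeriv c x)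
      (exp (tiltedEntropy c x / N) * (tiltedEntropyDeriv c x ^ 2 / N - (x * (1 - x))⁻¹)) x :=
    fun x hx ↦ ((((hasDerivAt_tiltedEntropy hx).div_const N).exp).fun_mul
      (hasDerivAt_tiltedEntropyDeriv hx)).congr_deriv (by ring)
  refine antitoneOn_of_hasDerivWithinAt_nonpos (convex_Ioo 0 1)
    (fun x hx ↦ (hderiv x hx).continuousAt.continuousWithinAt)
    (fun x hx ↦ (hderiv x (interior_subset hx)).hasDerivWithinAt) fun x hx ↦ ?_
  rw [interior_Ioo] at hx
  have hx' : 0 < x * (1 - x) := mul_pos hx.1 (sub_pos.2 hx.2)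
  have : tiltedEntropyDeriv c x ^ 2 / N ≤ (x * (1 - x))⁻¹ := by
    rw [div_le_iff₀ hN, inv_mul_eq_div, le_div_iff₀' hx']
    exact hbound x hx
  exact mul_nonpos_of_nonneg_of_nonpos (exp_pos _).le (sub_nonpos.2 this)

theorem tiltedEntropy_exp_bound_le_klDiv (hN : 0 < N)
    (hbound : ∀ x ∈ Ioo 0 1, x * (1 - x) * tiltedEntropyDeriv c x ^ 2 ≤ N)
    (hs : s ∈ Icc 0 1) (hr : r ∈ Ioo 0 1) :
    N * (exp ((tiltedEntropy c s - tiltedEntropy c r) / N) - 1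
        - (tiltedEntropy c s - tiltedEntropy c r) / N)
      ≤ s * log (s / r) + (1 - s) * log ((1 - s) / (1 - r)) := by
  set f := tiltedEntropy c
  set T := tiltedEntropyDeriv c
  have hKL := mul_log_div_add_one_sub_mul_log_div_eq hr.1.ne' hr.2.ne
  set g : ℝ → ℝ := fun x ↦ (-binEntropy x - x * log r - (1 - x) * log (1 - r))
    - N * (exp ((f x - f r) / N) - 1 - (f x - f r) / N)
  have hg_r : g r = 0 := by
    simp [g, ← hKL, div_self hr.1.ne', div_self (sub_pos.2 hr.2).ne']
  have hg' : ∀ x ∈ Ioo (0 : ℝ) 1, HasDerivAt g (T r - exp ((f x - f r) / N) * T x) x := by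
    intro x hx
    have hΔ := ((hasDerivAt_tiltedEntropy (c := c) hx).sub_const (f r)).div_const N
    refine (((((hasDerivAt_binEntropy hx.1.ne' hx.2.ne).neg.sub
      ((hasDerivAt_id' x).mul_const (log r))).sub
      (((hasDerivAt_id' x).const_sub 1).mul_const (log (1 - r)))).sub
      (((hΔ.exp.sub_const 1).sub hΔ).const_mul N))).congr_deriv ?_
    simp only [T, tiltedEntropyDeriv]
    field_simp
    ring
  have hw := antitoneOn_exp_tiltedEntropy_mul_tiltedEntropyDeriv hN hbound
  have hsign : ∀ x, exp (f r / N) * (T r - exp ((f x - f r) / N) * T x)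
      = exp (f r / N) * T r - exp (f x / N) * T x := by
    intro x
    rw [sub_div, exp_sub]
    field_simp
  have hmin : IsMinOn g (Icc 0 1) r := by
    refine isMinOn_of_hasDerivAt_nonpos_nonneg (Ioo_subset_Icc_self hr)
      (by fun_prop) hg' (fun x hx ↦ ?_) (fun x hx ↦ ?_)
    · refine nonpos_of_mul_nonpos_right ?_ (exp_pos (f r / N))
      rw [hsign x, sub_nonpos]
      exact hw ⟨hx.1, hx.2.trans hr.2⟩ hr hx.2.le
    · refine (mul_nonneg_iff_of_pos_left (exp_pos (f r / N))).1 ?_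
      rw [hsign x, sub_nonneg]
      exact hw hr ⟨hr.1.trans hx.1, hx.2⟩ hx.1.le
  have hgs : g r ≤ g s := hmin hs
  rw [hg_r] at hgs
  rw [hKL s]
  linarith

end Tilted

section Nfun

variable {d : ℕ}

theorem le_Nfun (hd : 2 ≤ d) {r : ℝ} (hr₀ : 0 < r) (hr : r < 1 / 2) :
    r * (1 - r) * log ((1 - r) / r * ((d : ℝ) - 1)) ^ 2 ≤ Nfun d := by
  have hd₁ : (1 : ℝ) ≤ d - 1 := by
    have : (2 : ℝ) ≤ d := by exact_mod_cast hd
    linarith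
  refine le_csSup ⟨4 * ((d : ℝ) - 1), ?_⟩ ⟨r, hr₀, hr, rfl⟩
  rintro _ ⟨t, ht₀, ht, rfl⟩
  have hy : 1 ≤ (1 - t) / t * ((d : ℝ) - 1) :=
    one_le_mul_of_one_le_of_one_le (by rw [le_div_iff₀ ht₀]; linarith) hd₁
  have ht' : 0 ≤ t * (1 - t) := mul_nonneg ht₀.le (by linarith)
  calc t * (1 - t) * log ((1 - t) / t * ((d : ℝ) - 1)) ^ 2
      ≤ t * (1 - t) * (4 * ((1 - t) / t * ((d : ℝ) - 1))) := by
        gcongr; exact sq_log_le_four_mul hy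
    _ = 4 * (1 - t) ^ 2 * ((d : ℝ) - 1) := by field_simp
    _ ≤ 4 * ((d : ℝ) - 1) := by gcongr; nlinarith

theorem Nfun_pos (hd : 2 ≤ d) : 0 < Nfun d := by
  refine lt_of_lt_of_le ?_ (le_Nfun hd (r := 1 / 4) (by norm_num) (by norm_num))
  have hd' : (2 : ℝ) ≤ d := by exact_mod_cast hd
  have : 0 < log ((1 - 1 / 4) / (1 / 4) * ((d : ℝ) - 1)) := log_pos (by nlinarith)
  positivity

theorem mul_one_sub_mul_sq_tiltedEntropyDeriv_le_Nfun (hd : 2 ≤ d) {x : ℝ} (hx : x ∈ Ioo 0 1) :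
    x * (1 - x) * tiltedEntropyDeriv (log ((d : ℝ) - 1)) x ^ 2 ≤ Nfun d := by
  set T := tiltedEntropyDeriv (log ((d : ℝ) - 1))
  have hd₁ : (1 : ℝ) ≤ d - 1 := by
    have : (2 : ℝ) ≤ d := by exact_mod_cast hd
    linarith
  have hlt : ∀ t ∈ Ioo (0 : ℝ) (1 / 2), t * (1 - t) * T t ^ 2 ≤ Nfun d := fun t ht ↦ by
    simpa only [T, tiltedEntropyDeriv, log_one_sub_div_mul_eq ht.1.ne' (by linarith [ht.2])
      (by linarith : (d : ℝ) - 1 ≠ 0)] using le_Nfun hd ht.1 ht.2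
  rcases lt_trichotomy x (1 / 2) with hx₂ | rfl | hx₂
  · exact hlt x ⟨hx.1, hx₂⟩
  · -- `Nfun` is a supremum over `r < 1/2` only; the point `1/2` is reached as a limit.
    have hT := (hasDerivAt_tiltedEntropyDeriv (c := log ((d : ℝ) - 1)) hx).continuousAt
    have hcont : ContinuousAt (fun t ↦ t * (1 - t) * T t ^ 2) (1 / 2) := by fun_prop
    exact le_of_tendsto (hcont.tendsto.mono_left nhdsWithin_le_nhds)
      (Filter.eventually_of_mem (Ioo_mem_nhdsLT (by norm_num)) hlt)
  · have h := hlt (1 - x) ⟨by linarith [hx.2], by linarith⟩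
    have hA : 0 ≤ log x - log (1 - x) := sub_nonneg.2 (log_le_log (by linarith [hx.2]) (by linarith))
    have hB : 0 ≤ log ((d : ℝ) - 1) := log_nonneg hd₁
    simp only [T, tiltedEntropyDeriv, sub_sub_cancel] at h ⊢
    nlinarith [mul_nonneg (mul_nonneg hx.1.le (sub_pos.2 hx.2).le) (mul_nonneg hA hB)]

end Nfun

/-- pointwise exponential-type lower bound on the binary relative entropy. -/
theorem binRelEntropy_ge_exp_bound (d : ℕ) (hd : 2 ≤ d) (s r : ℝ)
    (hs : s ∈ Set.Icc (0:ℝ) (((d:ℝ) - 1) / d)) (hr : r ∈ Set.Icc (0:ℝ) (((d:ℝ) - 1) / d)) :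
    ENNReal.ofReal (Nfun d *
        (Real.exp ((binEntropy' s - binEntropy' r + (s - r) * Real.log ((d:ℝ) - 1)) / Nfun d)
          - 1 - (binEntropy' s - binEntropy' r + (s - r) * Real.log ((d:ℝ) - 1)) / Nfun d))
      ≤ binRelEntropy s r := by
  have hd_lt_one : ((d : ℝ) - 1) / d < 1 := by
    have : (2 : ℝ) ≤ d := by exact_mod_cast hd
    rw [div_lt_one (by linarith)]
    linarith
  have hΔ : binEntropy' s - binEntropy' r + (s - r) * log ((d : ℝ) - 1) =
      tiltedEntropy (log ((d : ℝ) - 1)) s - tiltedEntropy (log ((d : ℝ) - 1)) r := by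
    rw [binEntropy'_eq_binEntropy, tiltedEntropy, tiltedEntropy]
    ring
  rw [hΔ, binRelEntropy]
  split_ifs with hinfinite
  · exact le_top
  rcases hr.1.eq_or_lt with rfl | hr₀
  · obtain rfl : s = 0 := by
      by_contra hs₀
      exact hinfinite (Or.inl ⟨rfl, hs.1.lt_of_ne' hs₀⟩)
    simp
  · exact ENNReal.ofReal_le_ofReal <| tiltedEntropy_exp_bound_le_klDiv (Nfun_pos hd)
      (fun x hx ↦ mul_one_sub_mul_sq_tiltedEntropyDeriv_le_Nfun hd hx)
      ⟨hs.1, (hs.2.trans_lt hd_lt_one).le⟩ ⟨hr₀, hr.2.trans_lt hd_lt_one⟩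

end
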